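/- Let G be a group, (U_g, ω) a projective unitary representation of G on ℂⁿ, (U'_g, ω') a projective unitary representation of G on ℂⁿ', (W_g) a family of e×e unitary complex matrices, and (W'_g) a family of e'×e' unitary complex matrices. Let V be a complex matrix with rows indexed by Fin n' × Fin e' and columns indexed by Fin n × Fin e satisfying Vᴴ · V = 1 and V · Vᴴ = 1, and suppose (U'_g ⊗ W'_g) · V = V · (U_g ⊗ W_g) for all g ∈ G. Let σ be an e×e positive semidefinite matrix of trace 1 with W_g · σ · W_gᴴ = σ for all g ∈ G. Define Λ(X) = Tr_{E'}[ V · (X ⊗ σ) · Vᴴ ], where Tr_{E'} is the partial trace over the second factor of Fin n' × Fin e'. Then Λ is (U,U')-covariant: Λ(U_g · X · U_gᴴ) = U'_g · Λ(X) · U'_gᴴ for all g ∈ G and all n×n complex matrices X. -/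
import Mathlib


open Matrix
open scoped Kronecker ComplexOrder

/-- The partial trace over the second (environment) tensor factor. -/
noncomputable def partialTraceE {n e : ℕ} (M : Matrix (Fin n × Fin e) (Fin n × Fin e) ℂ) :
    Matrix (Fin n) (Fin n) ℂ :=
  Matrix.of fun i j => ∑ k : Fin e, M (i, k) (j, k)

lemma sum_rot {α β γ M : Type*} [Fintype α] [Fintype β] [Fintype γ] [AddCommMonoid M]
    (f : α → β → γ → M) :
    (∑ a, ∑ b, ∑ c, f a b c) = ∑ c, ∑ a, ∑ b, f a b c :=
  calc (∑ a, ∑ b, ∑ c, f a b c) = ∑ a, ∑ c, ∑ b, f a b c :=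
        Finset.sum_congr rfl fun _ _ => Finset.sum_comm
    _ = ∑ c, ∑ a, ∑ b, f a b c := Finset.sum_comm

lemma ptE_conj {n e : ℕ} (A : Matrix (Fin n) (Fin n) ℂ) (B : Matrix (Fin e) (Fin e) ℂ)
    (hB : Bᴴ * B = 1) (M : Matrix (Fin n × Fin e) (Fin n × Fin e) ℂ) :
    partialTraceE ((A ⊗ₖ B) * M * (A ⊗ₖ B)ᴴ) = A * partialTraceE M * Aᴴ := by
  have hBd : ∀ p q : Fin e, (∑ k : Fin e, (starRingEnd ℂ) (B k q) * B k p) = if q = p then 1 else 0 := by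
    intro p q
    have := congrFun (congrFun hB q) p
    simpa [Matrix.mul_apply, Matrix.conjTranspose_apply, Matrix.one_apply] using this
  ext i j
  simp only [partialTraceE, Matrix.of_apply, Matrix.mul_apply, Matrix.conjTranspose_apply,
    Matrix.kroneckerMap_apply, Fintype.sum_prod_type, Finset.sum_mul, Finset.mul_sum]
  have key : ∀ (p1 q1 : Fin n) (p2 q2 : Fin e),
      (∑ k : Fin e, A i p1 * B k p2 * M (p1,p2) (q1,q2) * star (A j q1 * B k q2))
        = (if q2 = p2 then 1 else 0) * (A i p1 * M (p1,p2) (q1,q2) * star (A j q1)) := by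
    intro p1 q1 p2 q2
    rw [← hBd p2 q2, Finset.sum_mul]
    apply Finset.sum_congr rfl
    intro k _
    simp only [star_mul']
    ring_nf
    rfl
  rw [Finset.sum_comm]
  conv_lhs =>
    enter [2, q1]
    rw [Finset.sum_comm]
    enter [2, q2]
    rw [Finset.sum_comm]
    enter [2, p1]
    rw [Finset.sum_comm]
    enter [2, p2]
    rw [key p1 q1 p2 q2]
  simp only [ite_mul, one_mul, zero_mul, Finset.sum_ite_eq, Finset.mem_univ, if_true]
  rw [Finset.sum_comm]
  exact (sum_rot fun x x1 y => A i x1 * M (x1, y) (x, y) * star (A j x)).symm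

lemma kron_conjT {a b c d : ℕ} (A : Matrix (Fin a) (Fin b) ℂ) (B : Matrix (Fin c) (Fin d) ℂ) :
    (A ⊗ₖ B)ᴴ = Aᴴ ⊗ₖ Bᴴ := by
  ext ⟨i1, i2⟩ ⟨j1, j2⟩
  simp [Matrix.conjTranspose_apply, Matrix.kroneckerMap_apply, mul_comm]

/-- **A symmetric unitary dilation with a weak symmetric environment state yields
a `(U,U')`-covariant channel.** -/
theorem dilation_weak_covariant
    {G : Type*} [Group G] {n n' e e' : ℕ}
    (U : G → Matrix (Fin n) (Fin n) ℂ) (ω : G → G → ℂ)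
    (hUunit : ∀ g, (U g)ᴴ * U g = 1)
    (hUmul : ∀ g h, U g * U h = ω g h • U (g * h))
    (hUone : U 1 = 1)
    (U' : G → Matrix (Fin n') (Fin n') ℂ) (ω' : G → G → ℂ)
    (hU'unit : ∀ g, (U' g)ᴴ * U' g = 1)
    (hU'mul : ∀ g h, U' g * U' h = ω' g h • U' (g * h))
    (hU'one : U' 1 = 1)
    (W : G → Matrix (Fin e) (Fin e) ℂ)
    (hWunit : ∀ g, (W g)ᴴ * W g = 1)
    (W' : G → Matrix (Fin e') (Fin e') ℂ)
    (hW'unit : ∀ g, (W' g)ᴴ * W' g = 1)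
    (V : Matrix (Fin n' × Fin e') (Fin n × Fin e) ℂ)
    (hVisom : Vᴴ * V = 1) (hVcoisom : V * Vᴴ = 1)
    (hVint : ∀ g : G, (U' g ⊗ₖ W' g) * V = V * (U g ⊗ₖ W g))
    (σ : Matrix (Fin e) (Fin e) ℂ)
    (hσ : σ.PosSemidef) (hσtr : σ.trace = 1)
    (hσsym : ∀ g : G, W g * σ * (W g)ᴴ = σ) :
    ∀ (g : G) (X : Matrix (Fin n) (Fin n) ℂ),
      partialTraceE (V * ((U g * X * (U g)ᴴ) ⊗ₖ σ) * Vᴴ) =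
        U' g * partialTraceE (V * (X ⊗ₖ σ) * Vᴴ) * (U' g)ᴴ := by
  intro g X
  have h1 : (U g * X * (U g)ᴴ) ⊗ₖ σ = (U g ⊗ₖ W g) * (X ⊗ₖ σ) * (U g ⊗ₖ W g)ᴴ := by
    conv_rhs => rw [kron_conjT, ← Matrix.mul_kronecker_mul, ← Matrix.mul_kronecker_mul, hσsym g]
  have h3 : (U g ⊗ₖ W g)ᴴ * Vᴴ = Vᴴ * (U' g ⊗ₖ W' g)ᴴ := by
    rw [← Matrix.conjTranspose_mul, ← hVint, Matrix.conjTranspose_mul]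
  have h2 : V * ((U g * X * (U g)ᴴ) ⊗ₖ σ) * Vᴴ
      = (U' g ⊗ₖ W' g) * (V * (X ⊗ₖ σ) * Vᴴ) * (U' g ⊗ₖ W' g)ᴴ := by
    rw [h1]
    calc V * ((U g ⊗ₖ W g) * (X ⊗ₖ σ) * (U g ⊗ₖ W g)ᴴ) * Vᴴ
        = (V * (U g ⊗ₖ W g)) * (X ⊗ₖ σ) * ((U g ⊗ₖ W g)ᴴ * Vᴴ) := by
          simp only [Matrix.mul_assoc]
      _ = ((U' g ⊗ₖ W' g) * V) * (X ⊗ₖ σ) * (Vᴴ * (U' g ⊗ₖ W' g)ᴴ) := by rw [hVint, h3]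
      _ = (U' g ⊗ₖ W' g) * (V * (X ⊗ₖ σ) * Vᴴ) * (U' g ⊗ₖ W' g)ᴴ := by
          simp only [Matrix.mul_assoc]
  rw [h2, ptE_conj _ _ (hW'unit g)]
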